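/- For every γ ∈ Γ: F̃ takes M_γ to M'_γ (inducing maps G_γ : M_γ → M'_γ and GX_γ : X_γ → X'_γ); the translation amount of γ along the vertical ℝ-factor of M_γ equals its translation amount on M'_γ (equivalently, closed geodesics of N and of N' in the free homotopy class of γ have the same length); and G_γ commutes with the action of the centralizer Z(γ) of γ in Γ. -/

import Mathlib

open Metric Set Filter

/-- A unit-speed (local) geodesic line in a metric space: locally, distances along the
curve are realized. -/
def IsUnitGeodesic {M : Type*} [MetricSpace M] (c : ℝ → M) : Prop :=
  ∃ ε > 0, ∀ s t : ℝ, |s - t| ≤ ε → dist (c s) (c t) = |s - t|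

/-- The unit sphere bundle `S¹M`, modeled as the space of unit-speed geodesics of `M`
(a geodesic records the basepoint `c 0` together with its direction). -/
def SphereBundle (M : Type*) [MetricSpace M] : Type _ :=
  {c : ℝ → M // IsUnitGeodesic c}

instance {M : Type*} [MetricSpace M] : TopologicalSpace (SphereBundle M) :=
  inferInstanceAs (TopologicalSpace {c : ℝ → M // IsUnitGeodesic c})

/-- The geodesic flow `g_t` on the unit sphere bundle. -/
def geodFlow {M : Type*} [MetricSpace M] (t : ℝ) (c : SphereBundle M) : SphereBundle M :=
  ⟨fun s => c.1 (s + t), by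
    obtain ⟨ε, hε, h⟩ := c.2
    refine ⟨ε, hε, fun s s' hss => ?_⟩
    have : |s + t - (s' + t)| ≤ ε := by simpa [add_sub_add_right_eq_sub] using hss
    simpa [add_sub_add_right_eq_sub] using h (s + t) (s' + t) this⟩

/-- A `C⁰` conjugacy between the geodesic flows of `N` and `N'`. -/
structure FlowConjugacy (N N' : Type*) [MetricSpace N] [MetricSpace N'] where
  F : SphereBundle N → SphereBundle N'
  continuous : Continuous F
  conj : ∀ (t : ℝ) (c : SphereBundle N), F (geodFlow t c) = geodFlow t (F c)

/-- `m` is a midpoint of `y` and `z`. -/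
def IsMidpointPt {M : Type*} [MetricSpace M] (y z m : M) : Prop :=
  dist y m = dist y z / 2 ∧ dist m z = dist y z / 2

/-- The CAT(0) (nonpositive curvature) comparison inequality for a midpoint `m` of `y,z`,
viewed from `x`. -/
def CAT0Comparison {M : Type*} [MetricSpace M] (x y z m : M) : Prop :=
  dist x m ^ 2 ≤ (dist x y ^ 2 + dist x z ^ 2) / 2 - dist y z ^ 2 / 4

/-- `M` is (like) a Hadamard space: it is a geodesic space in which every unit-speed local
geodesic is globally minimizing, and the CAT(0) comparison inequality holds; this encodes
that `M` is a simply connected space of nonpositive curvature. -/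
def IsHadamardLike (M : Type*) [MetricSpace M] : Prop :=
  (∀ x y : M, ∃ c : SphereBundle M, c.1 0 = x ∧ c.1 (dist x y) = y) ∧
  (∀ c : SphereBundle M, ∀ s t : ℝ, dist (c.1 s) (c.1 t) = |s - t|) ∧
  (∀ x y z m : M, IsMidpointPt y z m → CAT0Comparison x y z m)

/-- The action of a group element on the unit sphere bundle (by isometries). -/
def gAct {Γ M : Type*} [Group Γ] [MetricSpace M] [MulAction Γ M] [IsIsometricSMul Γ M]
    (g : Γ) (c : SphereBundle M) : SphereBundle M :=
  ⟨fun t => g • c.1 t, by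
    obtain ⟨ε, hε, h⟩ := c.2
    exact ⟨ε, hε, fun s t hst => by rw [dist_smul]; exact h s t hst⟩⟩

/-- The action of `Γ` on `M` is cocompact (i.e. the quotient `N = M/Γ` is compact). -/
def CocompactAction (Γ M : Type*) [Group Γ] [MetricSpace M] [MulAction Γ M] : Prop :=
  ∃ K : Set M, IsCompact K ∧ (⋃ g : Γ, (fun m => g • m) '' K) = Set.univ

/-- Uniform continuity of a map between unit sphere bundles (distances between unit
vectors are measured by comparing the corresponding geodesics on the time interval
`[-1, 1]`). -/
def UnifContOnSphere {N N' : Type*} [MetricSpace N] [MetricSpace N']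
    (F : SphereBundle N → SphereBundle N') : Prop :=
  ∀ ε > (0:ℝ), ∃ δ > (0:ℝ), ∀ c c' : SphereBundle N,
    (∀ t ∈ Set.Icc (-1:ℝ) 1, dist (c.1 t) (c'.1 t) ≤ δ) →
    ∀ t ∈ Set.Icc (-1:ℝ) 1, dist ((F c).1 t) ((F c').1 t) ≤ ε

/-- The geodesic `c` stays within bounded distance of the geodesic `ν` with the same
parametrization; such `c` are exactly the "vertical" geodesics of `M_ν ≅ X_ν × ℝ`. -/
def ParallelTo {M : Type*} [MetricSpace M] (ν c : SphereBundle M) : Prop :=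
  ∃ C : ℝ, ∀ t : ℝ, dist (c.1 t) (ν.1 t) ≤ C

/-- `M_ν`: the union of all geodesics staying a bounded distance from `ν`. -/
def MSet {M : Type*} [MetricSpace M] (ν : SphereBundle M) : Set M :=
  {x | ∃ c : SphereBundle M, ParallelTo ν c ∧ x ∈ Set.range c.1}

/-- The minimal displacement set `M_γ` of an isometry `γ`. -/
def MinDispSet {Γ : Type*} [Group Γ] (M : Type*) [MetricSpace M] [MulAction Γ M]
    (γ : Γ) : Set M :=
  {m | ∀ x : M, dist m (γ • m) ≤ dist x (γ • x)}

/-- The point of the `ℓ²`-product `X × ℝ` with coordinates `(x, s)`. -/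
noncomputable def pmk {X : Type*} [MetricSpace X] (x : X) (s : ℝ) : WithLp 2 (X × ℝ) :=
  (WithLp.equiv 2 (X × ℝ)).symm (x, s)

/-- `c` is a (positively oriented) axis of `γ`, on which `γ` translates by `L`. -/
def IsAxisOf {Γ M : Type*} [Group Γ] [MetricSpace M] [MulAction Γ M]
    (γ : Γ) (L : ℝ) (c : SphereBundle M) : Prop :=
  ∀ t : ℝ, γ • c.1 t = c.1 (t + L)

/-!
`F` commutes with `γ` and with the geodesic flow, and an axis `c` of `γ` with translation `L`
is exactly a geodesic with `γ • c = g_L c`; hence `F` maps such axes to such axes. Once `γ`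
has an axis of translation `L`, comparing `γⁿ`-orbits shows that it moves every point by at
least `L`, so `M_γ` is the set of points moved by exactly `L`. Every such point `m` lies on an
axis (extend the segment `[m, γ m]` equivariantly; minimality of the displacement keeps the
extension geodesic), and by uniqueness of geodesic segments two axes through a point differ by
a time shift. So `G_γ (c t) := F(c) t` is well defined on `M_γ`, lands in `M'_γ`, and commutes
with the centralizer of `γ`, which permutes the axes of `γ`.
-/

namespace IsHadamardLike

variable {M : Type*} [MetricSpace M]

theorem isometry (hM : IsHadamardLike M) (c : SphereBundle M) : Isometry c.1 :=
  isometry_iff_dist_eq.2 fun s t => by rw [hM.2.1, Real.dist_eq]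

theorem exists_isMidpointPt (hM : IsHadamardLike M) (y z : M) : ∃ m, IsMidpointPt y z m := by
  obtain ⟨c, rfl, hcz⟩ := hM.1 y z
  have hd : 0 ≤ dist (c.1 0) z := dist_nonneg
  refine ⟨c.1 (dist (c.1 0) z / 2), ?_, ?_⟩
  · rw [(hM.isometry c).dist_eq, Real.dist_eq, abs_of_nonpos (by linarith)]
    ring
  · nth_rw 2 [← hcz]
    rw [(hM.isometry c).dist_eq, Real.dist_eq, abs_of_nonpos (by linarith)]
    ring

/-- Unless `p = q`, the CAT(0) inequality puts the midpoint of `p` and `q` strictly closer to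
both `x` and `y` than `p` is, contradicting the triangle inequality. -/
theorem eq_of_dist_add_dist_eq (hM : IsHadamardLike M) {x y p q : M}
    (hp : dist x p + dist p y = dist x y) (hq : dist x q + dist q y = dist x y)
    (hpq : dist x p = dist x q) : p = q := by
  obtain ⟨m, hm⟩ := hM.exists_isMidpointPt p q
  have hx := hM.2.2 x p q m hm
  have hy := hM.2.2 y p q m hm
  have hqy : dist q y = dist p y := by linarith
  unfold CAT0Comparison at hx hy
  rw [← hpq] at hx
  rw [dist_comm y p, dist_comm y q, hqy] at hy
  have hxm : dist x m ≤ dist x p := by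
    nlinarith [dist_nonneg (x := x) (y := m), dist_nonneg (x := x) (y := p), sq_nonneg (dist p q)]
  have hym : dist y m ≤ dist p y := by
    nlinarith [dist_nonneg (x := y) (y := m), dist_nonneg (x := p) (y := y), sq_nonneg (dist p q)]
  have hxm_eq : dist x m = dist x p := by linarith [dist_triangle x m y, dist_comm m y]
  rw [hxm_eq] at hx
  exact dist_le_zero.1 (by nlinarith [dist_nonneg (x := p) (y := q)])

end IsHadamardLike

theorem Isometry.dist_add_dist_of_mem_Icc {M : Type*} [MetricSpace M] {f : ℝ → M}
    (hf : Isometry f) {a b u : ℝ} (hu : u ∈ Set.Icc a b) :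
    dist (f a) (f u) + dist (f u) (f b) = dist (f a) (f b) := by
  simp only [hf.dist_eq, Real.dist_eq, abs_of_nonpos (sub_nonpos.2 hu.1),
    abs_of_nonpos (sub_nonpos.2 hu.2), abs_of_nonpos (sub_nonpos.2 (hu.1.trans hu.2))]
  ring

theorem le_of_forall_nat_mul_le_add {a b c : ℝ} (h : ∀ n : ℕ, n * a ≤ b + n * c) : a ≤ c := by
  by_contra! hca
  obtain ⟨n, hn⟩ := exists_nat_gt (b / (a - c))
  rw [div_lt_iff₀ (sub_pos.2 hca)] at hn
  linarith [h n]

theorem dist_pow_smul_self_le {Γ M : Type*} [Group Γ] [MetricSpace M] [MulAction Γ M]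
    [IsIsometricSMul Γ M] (g : Γ) (x : M) (n : ℕ) : dist x (g ^ n • x) ≤ n * dist x (g • x) := by
  induction n with
  | zero => simp
  | succ n ih =>
    calc dist x (g ^ (n + 1) • x) ≤ dist x (g ^ n • x) + dist (g ^ n • x) (g ^ n • g • x) := by
          rw [pow_succ, mul_smul]; exact dist_triangle _ _ _
      _ ≤ (n + 1 : ℕ) * dist x (g • x) := by rw [dist_smul]; push_cast; linarith

section Axes

variable {Γ M : Type*} [Group Γ] [MetricSpace M] [MulAction Γ M] {γ : Γ} {L : ℝ}
  {c c' : SphereBundle M}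

theorem IsAxisOf.zpow_smul (h : IsAxisOf γ L c) (k : ℤ) (t : ℝ) :
    γ ^ k • c.1 t = c.1 (t + k • L) := by
  induction k using Int.induction_on generalizing t with
  | zero => simp
  | succ k ih =>
    rw [zpow_add_one, mul_smul, h, ih, add_zsmul, one_zsmul]
    abel_nf
  | pred k ih =>
    have hinv : γ⁻¹ • c.1 t = c.1 (t - L) := by rw [inv_smul_eq_iff, h, sub_add_cancel]
    rw [zpow_sub_one, mul_smul, hinv, ih, sub_zsmul, one_zsmul]
    abel_nf

theorem IsAxisOf.apply_eq_zpow_smul (h : IsAxisOf γ L c) (hL : 0 < L) (u : ℝ) :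
    c.1 u = γ ^ toIcoDiv hL 0 u • c.1 (toIcoMod hL 0 u) := by
  rw [h.zpow_smul, toIcoMod_add_toIcoDiv_zsmul]

theorem IsAxisOf.dist_smul_self (h : IsAxisOf γ L c) (hc : Isometry c.1) (t : ℝ) :
    dist (c.1 t) (γ • c.1 t) = |L| := by
  rw [h, hc.dist_eq, Real.dist_eq, sub_add_cancel_left, abs_neg]

/-- Compare `x` with a point `c 0` of the axis: `γⁿ` moves `c 0` by `n L` and `x` by at most
`n d(x, γ x)`, and the two stay a bounded distance apart. -/
theorem IsAxisOf.le_dist_smul_self [IsIsometricSMul Γ M] (h : IsAxisOf γ L c)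
    (hc : Isometry c.1) (x : M) : L ≤ dist x (γ • x) := by
  refine le_of_forall_nat_mul_le_add (b := 2 * dist (c.1 0) x) fun n => ?_
  have hcn : dist (c.1 0) (γ ^ n • c.1 0) = |n * L| := by
    rw [← zpow_natCast, h.zpow_smul, hc.dist_eq, Real.dist_eq, zero_add, zero_sub, abs_neg,
      natCast_zsmul, nsmul_eq_mul]
  calc n * L ≤ dist (c.1 0) (γ ^ n • c.1 0) := hcn ▸ le_abs_self _
    _ ≤ dist (c.1 0) x + dist x (γ ^ n • x) + dist (γ ^ n • x) (γ ^ n • c.1 0) :=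
        dist_triangle4 _ _ _ _
    _ ≤ 2 * dist (c.1 0) x + n * dist x (γ • x) := by
        rw [dist_smul, dist_comm x (c.1 0)]; linarith [dist_pow_smul_self_le γ x n]

theorem IsAxisOf.mem_minDispSet_iff [IsIsometricSMul Γ M] (h : IsAxisOf γ L c)
    (hc : Isometry c.1) (hL : 0 ≤ L) {m : M} : m ∈ MinDispSet M γ ↔ dist m (γ • m) = L := by
  refine ⟨fun hm => le_antisymm ?_ (h.le_dist_smul_self hc m), fun hm x => ?_⟩
  · simpa only [h.dist_smul_self hc, abs_of_nonneg hL] using hm (c.1 0)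
  · exact hm ▸ h.le_dist_smul_self hc x

theorem isAxisOf_iff_gAct_eq_geodFlow [IsIsometricSMul Γ M] :
    IsAxisOf γ L c ↔ gAct γ c = geodFlow L c :=
  ⟨fun h => Subtype.ext (funext h), fun h t => congrFun (congrArg Subtype.val h) t⟩

theorem IsAxisOf.geodFlow (h : IsAxisOf γ L c) (s : ℝ) : IsAxisOf γ L (geodFlow s c) := by
  intro t
  change γ • c.1 (t + s) = c.1 (t + L + s)
  rw [add_right_comm]
  exact h (t + s)

theorem IsAxisOf.gAct_of_commute [IsIsometricSMul Γ M] (h : IsAxisOf γ L c) {α : Γ}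
    (hα : Commute α γ) : IsAxisOf γ L (gAct α c) := fun t => by
  change γ • α • c.1 t = α • c.1 (t + L)
  rw [← mul_smul, ← hα.eq, mul_smul, h]

/-- Two axes through the same point agree on the fundamental domain `[0, L)`, since both run
along the unique geodesic segment from that point to its `γ`-translate. -/
theorem IsAxisOf.eq_of_apply_zero_eq (hM : IsHadamardLike M) (hL : 0 < L)
    (h : IsAxisOf γ L c) (h' : IsAxisOf γ L c') (h0 : c.1 0 = c'.1 0) : c = c' := by
  have hcL : c.1 L = c'.1 L := by rw [← zero_add L, ← h, ← h', h0]
  have hseg : ∀ u ∈ Set.Ico 0 L, c.1 u = c'.1 u := fun u hu => by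
    have hu' := Set.Ico_subset_Icc_self hu
    refine hM.eq_of_dist_add_dist_eq ((hM.isometry c).dist_add_dist_of_mem_Icc hu') ?_ ?_
    · rw [h0, hcL]; exact (hM.isometry c').dist_add_dist_of_mem_Icc hu'
    · rw [(hM.isometry c).dist_eq, h0, (hM.isometry c').dist_eq]
  refine Subtype.ext (funext fun u => ?_)
  rw [h.apply_eq_zpow_smul hL, h'.apply_eq_zpow_smul hL,
    hseg _ (by simpa using toIcoMod_mem_Ico hL 0 u)]

end Axes

section PeriodicExtension

variable {Γ M : Type*} [Group Γ] [MulAction Γ M] {γ : Γ} {L : ℝ}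

noncomputable def periodicExtension (γ : Γ) (hL : 0 < L) (σ : ℝ → M) (u : ℝ) : M :=
  γ ^ toIcoDiv hL 0 u • σ (toIcoMod hL 0 u)

theorem periodicExtension_add_zsmul (hL : 0 < L) (σ : ℝ → M) (u : ℝ) (k : ℤ) :
    periodicExtension γ hL σ (u + k • L) = γ ^ k • periodicExtension γ hL σ u := by
  rw [periodicExtension, periodicExtension, toIcoDiv_add_zsmul, toIcoMod_add_zsmul, add_comm,
    zpow_add, mul_smul]

theorem periodicExtension_of_mem_Ico (hL : 0 < L) (σ : ℝ → M) {u : ℝ} (hu : u ∈ Set.Ico 0 L) :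
    periodicExtension γ hL σ u = σ u := by
  rw [periodicExtension, (toIcoDiv_eq_iff hL (n := 0)).2 (by simpa using hu),
    (toIcoMod_eq_self hL).2 (by simpa using hu), zpow_zero, one_smul]

theorem periodicExtension_add (hL : 0 < L) (σ : ℝ → M) (u : ℝ) :
    periodicExtension γ hL σ (u + L) = γ • periodicExtension γ hL σ u := by
  simpa using periodicExtension_add_zsmul (γ := γ) hL σ u 1

end PeriodicExtension

section AxisThroughPoint

variable {Γ M : Type*} [Group Γ] [MetricSpace M] [MulAction Γ M] {γ : Γ} {L : ℝ}

theorem isUnitGeodesic_of_dist_eq {f : ℝ → M} {ε : ℝ} (hε : 0 < ε)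
    (hf : ∀ s t, s ≤ t → t - s ≤ ε → dist (f s) (f t) = t - s) : IsUnitGeodesic f := by
  refine ⟨ε, hε, fun s t hst => ?_⟩
  rcases le_total s t with hle | hle
  · rw [hf s t hle (by rwa [abs_sub_comm, abs_of_nonneg (sub_nonneg.2 hle)] at hst),
      abs_sub_comm, abs_of_nonneg (sub_nonneg.2 hle)]
  · rw [dist_comm, hf t s hle (by rwa [abs_of_nonneg (sub_nonneg.2 hle)] at hst),
      abs_of_nonneg (sub_nonneg.2 hle)]

/-- The broken path `σ|[x, L]` followed by `γ • σ|[0, y]` is minimizing: a shortcut would move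
`σ y` by less than the minimal displacement `L`. -/
theorem dist_apply_smul_apply [IsIsometricSMul Γ M] {σ : ℝ → M} (hσ : Isometry σ)
    (hσL : σ L = γ • σ 0) (hmin : ∀ x : M, L ≤ dist x (γ • x)) {x y : ℝ} (hy : 0 ≤ y)
    (hyx : y ≤ x) (hx : x ≤ L) : dist (σ x) (γ • σ y) = L - x + y := by
  have hσxL : dist (σ x) (σ L) = L - x := by
    rw [hσ.dist_eq, Real.dist_eq, abs_of_nonpos (by linarith)]; ring
  have hσ0y : dist (σ 0) (σ y) = y := by
    rw [hσ.dist_eq, Real.dist_eq, abs_of_nonpos (by linarith)]; ring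
  have hσyx : dist (σ y) (σ x) = x - y := by
    rw [hσ.dist_eq, Real.dist_eq, abs_of_nonpos (by linarith)]; ring
  refine le_antisymm ?_ ?_
  · calc dist (σ x) (γ • σ y) ≤ dist (σ x) (σ L) + dist (γ • σ 0) (γ • σ y) :=
          hσL ▸ dist_triangle _ _ _
      _ = L - x + y := by rw [dist_smul, hσxL, hσ0y]
  · linarith [hmin (σ y), dist_triangle (σ y) (σ x) (γ • σ y)]

theorem dist_periodicExtension [IsIsometricSMul Γ M] (hL : 0 < L) {σ : ℝ → M}
    (hσ : Isometry σ) (hσL : σ L = γ • σ 0) (hmin : ∀ x : M, L ≤ dist x (γ • x)) {s t : ℝ}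
    (hst : s ≤ t) (hts : t - s ≤ L) :
    dist (periodicExtension γ hL σ s) (periodicExtension γ hL σ t) = t - s := by
  set k := toIcoDiv hL 0 s
  set s' := toIcoMod hL 0 s
  have hs' : s' ∈ Set.Ico 0 L := by simpa using toIcoMod_mem_Ico hL 0 s
  have hs : s = s' + k • L := (toIcoMod_add_toIcoDiv_zsmul hL 0 s).symm
  obtain ⟨t', rfl⟩ : ∃ t', t = t' + k • L := ⟨t - k • L, by abel⟩
  rw [hs, periodicExtension_add_zsmul, periodicExtension_add_zsmul, dist_smul,
    periodicExtension_of_mem_Ico hL σ hs', add_sub_add_right_eq_sub]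
  rw [hs, add_sub_add_right_eq_sub] at hts
  rw [hs, add_le_add_iff_right] at hst
  rcases lt_or_ge t' L with ht' | ht'
  · rw [periodicExtension_of_mem_Ico hL σ ⟨hs'.1.trans hst, ht'⟩, hσ.dist_eq, Real.dist_eq,
      abs_of_nonpos (by linarith)]
    ring
  · have hσt' : periodicExtension γ hL σ t' = γ • σ (t' - L) := by
      rw [← periodicExtension_of_mem_Ico (γ := γ) hL σ ⟨by linarith, by linarith [hs'.2]⟩,
        ← periodicExtension_add, sub_add_cancel]
    rw [hσt', dist_apply_smul_apply hσ hσL hmin (by linarith) (by linarith) hs'.2.le]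
    ring

theorem exists_isAxisOf_apply_zero_eq [IsIsometricSMul Γ M] (hM : IsHadamardLike M)
    (hL : 0 < L) (hmin : ∀ x : M, L ≤ dist x (γ • x)) {m : M} (hm : dist m (γ • m) = L) :
    ∃ c : SphereBundle M, IsAxisOf γ L c ∧ c.1 0 = m := by
  obtain ⟨σ, hσ0, hσL⟩ := hM.1 m (γ • m)
  rw [hm, ← hσ0] at hσL
  refine ⟨⟨periodicExtension γ hL σ.1, isUnitGeodesic_of_dist_eq hL fun s t hst hts =>
    dist_periodicExtension hL (hM.isometry σ) hσL hmin hst hts⟩, fun t => ?_, ?_⟩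
  · change γ • periodicExtension γ hL σ.1 t = periodicExtension γ hL σ.1 (t + L)
    rw [periodicExtension_add]
  · change periodicExtension γ hL σ.1 0 = m
    rw [periodicExtension_of_mem_Ico hL σ.1 ⟨le_rfl, hL⟩, hσ0]

end AxisThroughPoint

section Conjugacy

variable {Γ M M' : Type*} [Group Γ] [MetricSpace M] [MetricSpace M'] [MulAction Γ M]
  {γ : Γ} {L : ℝ} {c c' : SphereBundle M}

theorem IsAxisOf.map_flowConjugacy [MulAction Γ M'] [IsIsometricSMul Γ M] [IsIsometricSMul Γ M']
    (h : IsAxisOf γ L c) (F : FlowConjugacy M M')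
    (hF : ∀ c : SphereBundle M, F.F (gAct γ c) = gAct γ (F.F c)) :
    IsAxisOf (M := M') γ L (F.F c) := by
  rw [isAxisOf_iff_gAct_eq_geodFlow] at h ⊢
  rw [← hF, h, F.conj]

/-- Axes of `γ` through a common point are reparametrizations of each other, and `F`
commutes with reparametrization. -/
theorem FlowConjugacy.apply_eq_of_isAxisOf (hM : IsHadamardLike M) (hL : 0 < L)
    (F : FlowConjugacy M M') (h : IsAxisOf γ L c) (h' : IsAxisOf γ L c') {t s : ℝ}
    (hts : c.1 t = c'.1 s) : (F.F c).1 t = (F.F c').1 s := by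
  have hflow : geodFlow t c = geodFlow s c' :=
    (h.geodFlow t).eq_of_apply_zero_eq hM hL (h'.geodFlow s) (by simpa [geodFlow] using hts)
  have key := congrArg (fun d => (F.F d).1 0) hflow
  simp only [F.conj] at key
  change (F.F c).1 (0 + t) = (F.F c').1 (0 + s) at key
  rwa [zero_add, zero_add] at key

/-- The map `G_γ`; off the union of the axes of `γ` its value is junk. -/
noncomputable def axisMap [Nonempty M'] (F : FlowConjugacy M M') (γ : Γ) (L : ℝ) (m : M) : M' :=
  open Classical in
  if h : ∃ p : SphereBundle M × ℝ, IsAxisOf γ L p.1 ∧ p.1.1 p.2 = m then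
    (F.F h.choose.1).1 h.choose.2
  else Classical.arbitrary M'

theorem axisMap_apply [Nonempty M'] (hM : IsHadamardLike M) (hL : 0 < L)
    (F : FlowConjugacy M M') (h : IsAxisOf γ L c) (t : ℝ) :
    axisMap F γ L (c.1 t) = (F.F c).1 t := by
  have hex : ∃ p : SphereBundle M × ℝ, IsAxisOf γ L p.1 ∧ p.1.1 p.2 = c.1 t := ⟨(c, t), h, rfl⟩
  rw [axisMap, dif_pos hex]
  exact F.apply_eq_of_isAxisOf hM hL hex.choose_spec.1 h hex.choose_spec.2

theorem axisMap_smul [Nonempty M'] [MulAction Γ M'] [IsIsometricSMul Γ M]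
    [IsIsometricSMul Γ M'] (hM : IsHadamardLike M) (hL : 0 < L) (F : FlowConjugacy M M')
    {α : Γ} (hF : ∀ c : SphereBundle M, F.F (gAct α c) = gAct α (F.F c)) (hα : Commute α γ)
    (h : IsAxisOf γ L c) (t : ℝ) :
    axisMap F γ L (α • c.1 t) = α • axisMap F γ L (c.1 t) := by
  rw [axisMap_apply hM hL F h]
  change axisMap F γ L ((gAct α c).1 t) = (gAct α (F.F c)).1 t
  rw [axisMap_apply hM hL F (h.gAct_of_commute hα), hF]

end Conjugacy

theorem conjugacy_on_min_displacement_sets_general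
    {Γ M M' : Type*} [Group Γ] [MetricSpace M] [MetricSpace M']
    [MulAction Γ M] [MulAction Γ M'] [IsIsometricSMul Γ M] [IsIsometricSMul Γ M']
    (hM : IsHadamardLike M) (hM' : IsHadamardLike M')
    (F : FlowConjugacy M M')
    (hequiv : ∀ (g : Γ) (c : SphereBundle M), F.F (gAct g c) = gAct g (F.F c))
    (γ : Γ) (L : ℝ) (hL : 0 < L)
    (hax : ∃ c : SphereBundle M, IsAxisOf γ L c) :
    (∀ c : SphereBundle M, IsAxisOf γ L c → IsAxisOf (M := M') γ L (F.F c)) ∧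
    (∀ m ∈ MinDispSet M γ, dist m (γ • m) = L) ∧
    (∀ m' ∈ MinDispSet M' γ, dist m' (γ • m') = L) ∧
    ∃ G : M → M',
      Set.MapsTo G (MinDispSet M γ) (MinDispSet M' γ) ∧
      (∀ c : SphereBundle M, IsAxisOf γ L c → ∀ t : ℝ, (F.F c).1 t = G (c.1 t)) ∧
      (∀ α : Γ, α * γ = γ * α → ∀ m ∈ MinDispSet M γ, G (α • m) = α • G m) := by
  obtain ⟨c₀, hc₀⟩ := hax
  have hF : ∀ c, IsAxisOf γ L c → IsAxisOf (M := M') γ L (F.F c) := fun c hc =>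
    hc.map_flowConjugacy F (hequiv γ)
  have hMγ (m : M) := hc₀.mem_minDispSet_iff (hM.isometry c₀) hL.le (m := m)
  have hM'γ (m : M') := (hF c₀ hc₀).mem_minDispSet_iff (hM'.isometry _) hL.le (m := m)
  have haxis : ∀ m ∈ MinDispSet M γ, ∃ c, IsAxisOf γ L c ∧ c.1 0 = m := fun m hm =>
    exists_isAxisOf_apply_zero_eq hM hL (hc₀.le_dist_smul_self (hM.isometry c₀)) ((hMγ m).1 hm)
  have : Nonempty M' := ⟨(F.F c₀).1 0⟩
  refine ⟨hF, fun m => (hMγ m).1, fun m => (hM'γ m).1, axisMap F γ L, ?_,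
    fun c hc t => (axisMap_apply hM hL F hc t).symm, fun α hα m hm => ?_⟩
  · intro m hm
    obtain ⟨c, hc, rfl⟩ := haxis m hm
    rw [axisMap_apply hM hL F hc, hM'γ, (hF c hc).dist_smul_self (hM'.isometry _),
      abs_of_pos hL]
  · obtain ⟨c, hc, rfl⟩ := haxis m hm
    exact axisMap_smul hM hL F (hequiv α) hα hc 0

/-- In the lifted conjugacy setting, for every `γ ∈ Γ` (with an axis of
translation length `L > 0` in `M`): `F` takes axes of `γ` in `M` to axes of `γ` in `M'`
with the *same* translation amount `L` (so `F` takes `M_γ` to `M'_γ` and closed geodesics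
of `N` and `N'` in the free homotopy class of `γ` have the same length `L`); moreover the
induced map `G_γ : M_γ → M'_γ` (sending vertical vectors to vertical vectors) commutes with
the action of the centralizer `Z(γ)`. -/
theorem conjugacy_on_min_displacement_sets
    {Γ M M' : Type*} [Group Γ] [MetricSpace M] [MetricSpace M']
    [MulAction Γ M] [MulAction Γ M'] [IsIsometricSMul Γ M] [IsIsometricSMul Γ M']
    [SimplyConnectedSpace M] [SimplyConnectedSpace M']
    (n : ℕ) (hn : 3 ≤ n)
    (hdim : Nonempty (ChartedSpace (EuclideanSpace ℝ (Fin n)) M) ∧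
      Nonempty (ChartedSpace (EuclideanSpace ℝ (Fin n)) M'))
    (hM : IsHadamardLike M) (hM' : IsHadamardLike M')
    (hco : CocompactAction Γ M) (hco' : CocompactAction Γ M')
    (F : FlowConjugacy M M')
    (hUC : UnifContOnSphere F.F)
    (hequiv : ∀ (g : Γ) (c : SphereBundle M), F.F (gAct g c) = gAct g (F.F c))
    (γ : Γ) (L : ℝ) (hL : 0 < L)
    (hax : ∃ c : SphereBundle M, IsAxisOf γ L c) :
    (∀ c : SphereBundle M, IsAxisOf γ L c → IsAxisOf (M := M') γ L (F.F c)) ∧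
    (∀ m ∈ MinDispSet M γ, dist m (γ • m) = L) ∧
    (∀ m' ∈ MinDispSet M' γ, dist m' (γ • m') = L) ∧
    ∃ G : M → M',
      Set.MapsTo G (MinDispSet M γ) (MinDispSet M' γ) ∧
      (∀ c : SphereBundle M, IsAxisOf γ L c → ∀ t : ℝ, (F.F c).1 t = G (c.1 t)) ∧
      (∀ α : Γ, α * γ = γ * α → ∀ m ∈ MinDispSet M γ, G (α • m) = α • G m) :=
  conjugacy_on_min_displacement_sets_general hM hM' F hequiv γ L hL hax
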